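/- arXiv:math/9905108 — 3 statements merged into one kernel-verified Lean document; each statement's English description precedes it below -/
import Mathlib

section
/- The plane curve germ at the origin defined by x(z² + x) = t·z³ in coordinates (x,z) has Milnor number 2 (type A₂) when t ≠ 0, and Milnor number 3 (type A₃) when t = 0. Hence the jump in Milnor number at t = 0 equals 1. -/
/-!
Since `∂g_t/∂x = 2x + z²`, the Jacobian ideal of `g_t = x(z² + x) - t z³` in `ℂ[[x,z]]` is
`(x + z²/2, ∂g_t/∂z - 2z(x + z²/2)) = (x + z²/2, (z + 3t) z²)`. For `t ≠ 0` the factor `z + 3t`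
is a unit, so the ideal is `(x + z²/2, z²)`; for `t = 0` it is `(x + z²/2, z³)`. The shear
`x ↦ x + z²/2`, `z ↦ z` is an automorphism of `ℂ[[x,z]]` carrying `(x, z^k)` onto
`(x + z²/2, z^k)`, and `ℂ[[x,z]]/(x, z^k)` has basis `1, z, …, z^(k-1)`.
-/

open MvPolynomial

/-- The Milnor number of an isolated plane curve singularity germ `g` at the origin:
the dimension over `ℂ` of the quotient of the formal power series ring `ℂ[[x,z]]`
(playing the role of the local ring `ℂ{x,z}`) by the Jacobian ideal `(∂g/∂x, ∂g/∂z)`. -/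
noncomputable def milnor (g : MvPolynomial (Fin 2) ℂ) : ℕ :=
  Module.finrank ℂ
    ((MvPowerSeries (Fin 2) ℂ) ⧸
      Ideal.span {(↑(pderiv 0 g) : MvPowerSeries (Fin 2) ℂ),
                  (↑(pderiv 1 g) : MvPowerSeries (Fin 2) ℂ)})

namespace MvPowerSeries

open Finsupp

section Subst

variable {σ R : Type*} [CommRing R]

theorem substAlgHom_comp_substAlgHom_eq_id {a b : σ → MvPowerSeries σ R}
    (ha : HasSubst a) (hb : HasSubst b) (hab : ∀ s, subst a (b s) = X s) :
    (substAlgHom ha).comp (substAlgHom hb) = AlgHom.id R _ := by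
  ext f
  have hcomp := substAlgHom_comp_substAlgHom_apply hb ha f
  simp only [substAlgHom_apply] at hcomp
  simp only [AlgHom.comp_apply, substAlgHom_apply, AlgHom.id_apply, hcomp, hab]
  rw [subst_self, id]

noncomputable def substAlgEquiv {a b : σ → MvPowerSeries σ R}
    (ha : HasSubst a) (hb : HasSubst b)
    (hab : ∀ s, subst a (b s) = X s) (hba : ∀ s, subst b (a s) = X s) :
    MvPowerSeries σ R ≃ₐ[R] MvPowerSeries σ R :=
  AlgEquiv.ofAlgHom (substAlgHom ha) (substAlgHom hb)
    (substAlgHom_comp_substAlgHom_eq_id ha hb hab)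
    (substAlgHom_comp_substAlgHom_eq_id hb ha hba)

@[simp]
theorem substAlgEquiv_apply {a b : σ → MvPowerSeries σ R}
    (ha : HasSubst a) (hb : HasSubst b)
    (hab : ∀ s, subst a (b s) = X s) (hba : ∀ s, subst b (a s) = X s)
    (f : MvPowerSeries σ R) :
    substAlgEquiv ha hb hab hba f = subst a f :=
  substAlgHom_apply ha f

end Subst

section Shear

variable {R : Type*} [CommRing R]

noncomputable def shear (c : R) (n : ℕ) : Fin 2 → MvPowerSeries (Fin 2) R :=
  ![X 0 + C c * X 1 ^ n, X 1]

@[simp] theorem shear_zero (c : R) (n : ℕ) : shear c n 0 = X 0 + C c * X 1 ^ n := rfl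

@[simp] theorem shear_one (c : R) (n : ℕ) : shear c n 1 = X 1 := rfl

theorem hasSubst_shear (c : R) {n : ℕ} (hn : n ≠ 0) : HasSubst (shear c n) :=
  hasSubst_of_constantCoeff_zero fun s => by
    fin_cases s <;> simp [zero_pow hn]

theorem subst_shear_shear_neg (c : R) {n : ℕ} (hn : n ≠ 0) (s : Fin 2) :
    subst (shear c n) (shear (-c) n s) = X s := by
  have ha := hasSubst_shear c hn
  match s with
  | 0 =>
    rw [shear_zero, map_neg, neg_mul, ← sub_eq_add_neg, subst_sub ha, subst_mul ha, subst_pow ha,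
      subst_X ha, subst_X ha, subst_C, shear_zero, shear_one, add_sub_cancel_right]
  | 1 => rw [shear_one, subst_X ha, shear_one]

noncomputable def shearEquiv (c : R) {n : ℕ} (hn : n ≠ 0) :
    MvPowerSeries (Fin 2) R ≃ₐ[R] MvPowerSeries (Fin 2) R :=
  substAlgEquiv (hasSubst_shear c hn) (hasSubst_shear (-c) hn)
    (subst_shear_shear_neg c hn) (by simpa using subst_shear_shear_neg (-c) hn)

theorem map_shearEquiv_span_X_X_pow (c : R) {n : ℕ} (hn : n ≠ 0) (k : ℕ) :
    Ideal.span {X 0 + C c * X 1 ^ n, X 1 ^ k} =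
      (Ideal.span {X 0, X 1 ^ k}).map
        (shearEquiv c hn : MvPowerSeries (Fin 2) R →+* MvPowerSeries (Fin 2) R) := by
  have ha := hasSubst_shear c hn
  rw [Ideal.map_span, Set.image_pair]
  simp [shearEquiv, subst_pow ha, subst_X ha]

end Shear

section Ring

variable {R : Type*} [CommRing R]

theorem mem_span_X_X_pow_iff {k : ℕ} {f : MvPowerSeries (Fin 2) R} :
    f ∈ Ideal.span {X 0, X 1 ^ k} ↔ ∀ b < k, coeff (single 1 b) f = 0 := by
  constructor
  · rintro hf b hb
    obtain ⟨p, q, rfl⟩ := Ideal.mem_span_pair.mp hf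
    have hp : coeff (single 1 b) (p * X 0) = 0 :=
      X_dvd_iff.mp (dvd_mul_left _ _) _ (by simp)
    have hq : coeff (single 1 b) (q * X 1 ^ k) = 0 :=
      X_pow_dvd_iff.mp (dvd_mul_left _ _) _ (by simpa using hb)
    rw [map_add, hp, hq, add_zero]
  · intro hf
    let r : MvPowerSeries (Fin 2) R := fun d => if d 0 = 0 then coeff d f else 0
    have hr : ∀ d, coeff d r = if d 0 = 0 then coeff d f else 0 := fun _ => rfl
    obtain ⟨p, hp⟩ : X 0 ∣ f - r := X_dvd_iff.mpr fun d hd => by simp [hr, hd]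
    obtain ⟨q, hq⟩ : X 1 ^ k ∣ r := X_pow_dvd_iff.mpr fun d hd => by
      rw [hr]
      split_ifs with h0
      · have hd_eq : d = single 1 (d 1) := by ext i; fin_cases i <;> simp [h0]
        rw [hd_eq, hf _ hd]
      · rfl
    exact Ideal.mem_span_pair.mpr
      ⟨p, q, by rw [mul_comm p, mul_comm q, ← hp, ← hq, sub_add_cancel]⟩

end Ring

section Field

variable {K : Type*} [Field K]

variable (K) in
noncomputable def coeffsX1 (k : ℕ) :
    MvPowerSeries (Fin 2) K →ₗ[K] (Fin k → K) :=
  LinearMap.pi fun b => coeff (single 1 (b : ℕ))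

theorem ker_coeffsX1 (k : ℕ) :
    LinearMap.ker (coeffsX1 K k) = (Ideal.span {X 0, X 1 ^ k}).restrictScalars K := by
  ext f
  simp [coeffsX1, mem_span_X_X_pow_iff, funext_iff, Fin.forall_iff]

theorem coeffsX1_surjective (k : ℕ) : Function.Surjective (coeffsX1 K k) := fun v => by
  refine ⟨∑ i : Fin k, monomial (single 1 (i : ℕ)) (v i), funext fun b => ?_⟩
  simp [coeffsX1, coeff_monomial, (single_injective _).eq_iff, Fin.val_inj]

theorem finrank_quotient_span_X_X_pow (k : ℕ) :
    Module.finrank K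
      (MvPowerSeries (Fin 2) K ⧸ Ideal.span {(X 0 : MvPowerSeries (Fin 2) K), X 1 ^ k}) = k := by
  have e : (MvPowerSeries (Fin 2) K ⧸ Ideal.span {(X 0 : MvPowerSeries (Fin 2) K), X 1 ^ k})
      ≃ₗ[K] (Fin k → K) :=
    (Submodule.Quotient.restrictScalarsEquiv K _).symm ≪≫ₗ
      Submodule.quotEquivOfEq _ _ (ker_coeffsX1 k).symm ≪≫ₗ
      (coeffsX1 K k).quotKerEquivOfSurjective (coeffsX1_surjective k)
  rw [e.finrank_eq, Module.finrank_fin_fun]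

theorem finrank_quotient_span_shear (c : K) {n : ℕ} (hn : n ≠ 0) (k : ℕ) :
    Module.finrank K
      (MvPowerSeries (Fin 2) K ⧸ Ideal.span {X 0 + C c * X 1 ^ n, X 1 ^ k}) = k := by
  rw [← (Ideal.quotientEquivAlg _ _ (shearEquiv c hn)
    (map_shearEquiv_span_X_X_pow c hn k)).toLinearEquiv.finrank_eq,
    finrank_quotient_span_X_X_pow]

end Field

end MvPowerSeries

section A3Deformation

variable {R : Type*} [CommRing R]

noncomputable def a3Deformation (t : R) : MvPolynomial (Fin 2) R :=
  X 0 * (X 1 ^ 2 + X 0) - C t * X 1 ^ 3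

theorem pderiv_zero_a3Deformation (t : R) :
    pderiv 0 (a3Deformation t) = X 1 ^ 2 + 2 * X 0 := by
  simp [a3Deformation, pderiv_X_of_ne (show (1 : Fin 2) ≠ 0 by decide)]
  ring

theorem pderiv_one_a3Deformation (t : R) :
    pderiv 1 (a3Deformation t) = 2 * X 0 * X 1 - 3 * C t * X 1 ^ 2 := by
  simp [a3Deformation, pderiv_X_of_ne (show (0 : Fin 2) ≠ 1 by decide)]
  ring

end A3Deformation

theorem span_pderiv_a3Deformation (t : ℂ) :
    Ideal.span {(↑(pderiv 0 (a3Deformation t)) : MvPowerSeries (Fin 2) ℂ),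
        ↑(pderiv 1 (a3Deformation t))} =
      Ideal.span {MvPowerSeries.X 0 + MvPowerSeries.C 2⁻¹ * MvPowerSeries.X 1 ^ 2,
        (MvPowerSeries.X 1 + MvPowerSeries.C (3 * t)) * MvPowerSeries.X 1 ^ 2} := by
  rw [pderiv_zero_a3Deformation, pderiv_one_a3Deformation]
  simp only [← coeToMvPowerSeries.ringHom_apply, map_add, map_sub, map_mul, map_pow, map_ofNat]
  simp only [coeToMvPowerSeries.ringHom_apply, coe_X, coe_C]
  set x : MvPowerSeries (Fin 2) ℂ := MvPowerSeries.X 0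
  set z : MvPowerSeries (Fin 2) ℂ := MvPowerSeries.X 1
  have h2 : MvPowerSeries.C (σ := Fin 2) (2⁻¹ : ℂ) * 2 = 1 := by
    rw [← map_ofNat MvPowerSeries.C 2, ← map_mul, inv_mul_cancel₀ two_ne_zero, map_one]
  apply le_antisymm <;> rw [Ideal.span_le, Set.insert_subset_iff, Set.singleton_subset_iff] <;>
    refine ⟨Ideal.mem_span_pair.mpr ?_, Ideal.mem_span_pair.mpr ?_⟩
  · exact ⟨2, 0, by linear_combination z ^ 2 * h2⟩
  · exact ⟨2 * z, -1, by linear_combination z ^ 3 * h2⟩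
  · exact ⟨MvPowerSeries.C 2⁻¹, 0, by linear_combination x * h2⟩
  · exact ⟨z, -1, by ring⟩

theorem milnor_a3Deformation_of_ne_zero {t : ℂ} (ht : t ≠ 0) : milnor (a3Deformation t) = 2 := by
  have hu : IsUnit (MvPowerSeries.X 1 + MvPowerSeries.C (3 * t) : MvPowerSeries (Fin 2) ℂ) := by
    simpa [MvPowerSeries.isUnit_iff_constantCoeff] using ht
  rw [milnor, span_pderiv_a3Deformation, Ideal.span_insert,
    Ideal.span_singleton_mul_left_unit hu, ← Ideal.span_insert,
    MvPowerSeries.finrank_quotient_span_shear _ two_ne_zero]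

theorem milnor_a3Deformation_zero : milnor (a3Deformation (0 : ℂ)) = 3 := by
  rw [milnor, span_pderiv_a3Deformation, mul_zero, map_zero, add_zero, ← pow_succ',
    MvPowerSeries.finrank_quotient_span_shear _ two_ne_zero]

/-- the plane curve germ `x(z² + x) = t·z³` at the origin has Milnor
number 2 (type A₂) for t ≠ 0 and Milnor number 3 (type A₃) for t = 0; hence the jump
at t = 0 equals 1. Here `X 0 = x`, `X 1 = z`. -/
theorem stmt_5 :
    (∀ t : ℂ, t ≠ 0 →
      milnor (X 0 * ((X 1) ^ 2 + X 0) - C t * (X 1) ^ 3) = 2) ∧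
    milnor (X 0 * ((X 1) ^ 2 + X 0)) = 3 ∧
    (∀ t : ℂ, t ≠ 0 →
      milnor (X 0 * ((X 1) ^ 2 + X 0)) -
        milnor (X 0 * ((X 1) ^ 2 + X 0) - C t * (X 1) ^ 3) = 1) := by
  have hA₂ : ∀ t : ℂ, t ≠ 0 → milnor (X 0 * ((X 1) ^ 2 + X 0) - C t * (X 1) ^ 3) = 2 :=
    fun _ => milnor_a3Deformation_of_ne_zero
  have hA₃ : milnor (X 0 * ((X 1) ^ 2 + X 0)) = 3 := by
    simpa [a3Deformation] using milnor_a3Deformation_zero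
  exact ⟨hA₂, hA₃, fun t ht => by rw [hA₂ t ht, hA₃]⟩
end

section
/- Let a, b, p, q ≥ 1 be integers with a + b + 1 = p + q. The plane curve germ at the origin defined (in the chart y = 1, coordinates (x,z)) by x^{a+1} + x z^{a+b} − t z^q = 0 has, for t ≠ 0, Milnor number a(q − 1) (Brieskorn type (a+1, q)), and for t = 0 Milnor number a² + ab + b. Consequently the jump of the Milnor number at t = 0 equals b + ap. -/
open MvPolynomial

/-
For `t ≠ 0` the `z`-derivative is `z^(q-1)` times a unit of `ℂ[[x,z]]` (its constant term is
`-q t`), and modulo `z^(q-1)` the `x`-derivative `(a+1) x^a + z^(a+b)` is a unit times `x^a`. So the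
Jacobian ideal is the monomial ideal `(x^a, z^(q-1))`, whose quotient has the monomials `x^i z^j`,
`i < a`, `j < q-1`, as a basis.

For `t = 0`, with `m = a + b`, the Jacobian ideal is `(f, x z^(m-1))` where `f = (a+1) x^a + z^m`.
Since `x` is a non-zero-divisor modulo `f`, multiplication by `x` embeds `ℂ[[x,z]]/(f, z^(m-1))`
into `ℂ[[x,z]]/(f, x z^(m-1))` with cokernel `ℂ[[x,z]]/(f, x)` (additivity of intersection
multiplicities), and `(f, x) = (x, z^m)`, `(f, z^(m-1)) = (x^a, z^(m-1))` are monomial ideals: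
the Milnor number is `m + a (m-1)`.
-/

theorem Ideal.span_pair_mul_left_unit {R : Type*} [CommRing R] {e : R} (he : IsUnit e) (x y : R) :
    Ideal.span {x, e * y} = Ideal.span {x, y} := by
  rw [Ideal.span_insert, Ideal.span_singleton_mul_left_unit he, ← Ideal.span_insert]

theorem Ideal.span_pair_unit_mul_add_mul_right {R : Type*} [CommRing R] {c : R} (hc : IsUnit c)
    (x y z : R) : Ideal.span {c * x + z * y, y} = Ideal.span {x, y} := by
  rw [Ideal.span_pair_add_mul_right, Ideal.span_pair_comm, Ideal.span_pair_mul_left_unit hc,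
    Ideal.span_pair_comm]

-- Stated with `Module.rank`, which is additive without any finiteness hypothesis.
theorem Ideal.rank_quotient_span_pair_mul {k R : Type*} [Field k] [CommRing R] [Algebra k R]
    {f g : R} (hg : ∀ s, g * s ∈ Ideal.span {f} → s ∈ Ideal.span {f}) (h : R) :
    Module.rank k (R ⧸ Ideal.span {f, g * h}) =
      Module.rank k (R ⧸ Ideal.span {f, g}) + Module.rank k (R ⧸ Ideal.span {f, h}) := by
  set I := Ideal.span {f, g * h}
  have hIJ : I ≤ Ideal.span {f, g} := by
    rw [Ideal.span_le]
    rintro _ (rfl | rfl)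
    · exact Ideal.subset_span (by simp)
    · exact Ideal.mul_mem_right _ _ (Ideal.subset_span (by simp))
  let π := (Ideal.Quotient.factorₐ k hIJ).toLinearMap
  let ψ := (Ideal.Quotient.mkₐ k I).toLinearMap ∘ₗ LinearMap.mulLeft k g
  have hker : LinearMap.ker ψ = (Ideal.span {f, h}).restrictScalars k := by
    ext r
    simp only [LinearMap.mem_ker, Submodule.restrictScalars_mem, ψ, LinearMap.comp_apply,
      AlgHom.toLinearMap_apply, Ideal.Quotient.mkₐ_eq_mk, LinearMap.mulLeft_apply,
      Ideal.Quotient.eq_zero_iff_mem, I, Ideal.mem_span_pair]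
    constructor
    · rintro ⟨α, β, hαβ⟩
      obtain ⟨γ, hγ⟩ := Ideal.mem_span_singleton'.1 (hg (r - β * h)
        (Ideal.mem_span_singleton'.2 ⟨α, by linear_combination hαβ⟩))
      exact ⟨γ, β, by linear_combination hγ⟩
    · rintro ⟨α, β, rfl⟩
      exact ⟨g * α, β, by ring⟩
  have hexact : LinearMap.ker π = LinearMap.range ψ := by
    ext x
    obtain ⟨r, rfl⟩ := Ideal.Quotient.mk_surjective x
    simp only [LinearMap.mem_ker, LinearMap.mem_range, π, ψ, AlgHom.toLinearMap_apply,
      Ideal.Quotient.factorₐ_apply_mk, LinearMap.comp_apply, Ideal.Quotient.mkₐ_eq_mk,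
      LinearMap.mulLeft_apply, Ideal.Quotient.eq_zero_iff_mem, Ideal.Quotient.eq, I,
      Ideal.mem_span_pair]
    constructor
    · rintro ⟨α, β, rfl⟩
      exact ⟨β, -α, 0, by ring⟩
    · rintro ⟨y, α, β, hαβ⟩
      exact ⟨-α, y - β * h, by linear_combination -hαβ⟩
  rw [← LinearMap.rank_range_add_rank_ker π,
    LinearMap.range_eq_top.2 (Ideal.Quotient.factor_surjective hIJ), rank_top, hexact,
    ← ψ.quotKerEquivRange.rank_eq, hker,
    (Submodule.Quotient.restrictScalarsEquiv k _).rank_eq]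

namespace MvPowerSeries

theorem mem_span_X_pow_pair_iff {σ R : Type*} [CommSemiring R] {s t : σ} {A B : ℕ}
    {f : MvPowerSeries σ R} :
    f ∈ Ideal.span {X s ^ A, X t ^ B} ↔ ∀ d : σ →₀ ℕ, d s < A → d t < B → coeff d f = 0 := by
  constructor
  · rintro hf d hs ht
    obtain ⟨α, β, rfl⟩ := Ideal.mem_span_pair.1 hf
    have hα : X s ^ A ∣ α * X s ^ A := dvd_mul_left _ _
    have hβ : X t ^ B ∣ β * X t ^ B := dvd_mul_left _ _
    rw [map_add, X_pow_dvd_iff.1 hα d hs, X_pow_dvd_iff.1 hβ d ht, add_zero]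
  · intro hf
    let high : MvPowerSeries σ R := fun d => if A ≤ d s then coeff d f else 0
    let low : MvPowerSeries σ R := fun d => if A ≤ d s then 0 else coeff d f
    have coeff_high (d) : coeff d high = if A ≤ d s then coeff d f else 0 := rfl
    have coeff_low (d) : coeff d low = if A ≤ d s then 0 else coeff d f := rfl
    have hsplit : f = high + low := by
      ext d
      rw [map_add, coeff_high, coeff_low]
      split_ifs <;> simp
    obtain ⟨α, hα⟩ : X s ^ A ∣ high := X_pow_dvd_iff.2 fun d hd => by
      rw [coeff_high, if_neg (not_le.2 hd)]
    obtain ⟨β, hβ⟩ : X t ^ B ∣ low := X_pow_dvd_iff.2 fun d hd => by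
      rw [coeff_low]
      split_ifs with hs
      · rfl
      · exact hf d (not_le.1 hs) hd
    rw [hsplit, hα, hβ, mul_comm _ α, mul_comm _ β]
    exact Ideal.mem_span_pair.2 ⟨α, β, rfl⟩

theorem rank_quotient_span_X_pow_pair {k : Type*} [Field k] (A B : ℕ) :
    Module.rank k
      (MvPowerSeries (Fin 2) k ⧸ Ideal.span {(X 0 ^ A : MvPowerSeries (Fin 2) k), X 1 ^ B}) =
      A * B := by
  let box : MvPowerSeries (Fin 2) k →ₗ[k] (Fin A × Fin B → k) :=
    LinearMap.pi fun ij => coeff (Finsupp.single 0 (ij.1 : ℕ) + Finsupp.single 1 (ij.2 : ℕ))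
  have hker : LinearMap.ker box =
      (Ideal.span {(X 0 ^ A : MvPowerSeries (Fin 2) k), X 1 ^ B}).restrictScalars k := by
    ext f
    simp only [LinearMap.mem_ker, Submodule.restrictScalars_mem, mem_span_X_pow_pair_iff,
      funext_iff, box, LinearMap.pi_apply, Pi.zero_apply, Prod.forall, Fin.forall_iff]
    constructor
    · intro h d h0 h1
      have hd : d = Finsupp.single 0 (d 0) + Finsupp.single 1 (d 1) := by
        ext i; fin_cases i <;> simp
      rw [hd]
      exact h (d 0) h0 (d 1) h1
    · intro h i hi j hj
      exact h _ (by simpa using hi) (by simpa using hj)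
  have hsurj : Function.Surjective box := fun c => by
    let g : MvPowerSeries (Fin 2) k := fun d =>
      if h : d 0 < A ∧ d 1 < B then c (⟨d 0, h.1⟩, ⟨d 1, h.2⟩) else 0
    refine ⟨g, funext fun ⟨i, j⟩ => ?_⟩
    change g (Finsupp.single 0 (i : ℕ) + Finsupp.single 1 (j : ℕ)) = c (i, j)
    simp [g]
  rw [← (Submodule.Quotient.restrictScalarsEquiv k _).rank_eq, ← hker,
    (box.quotKerEquivOfSurjective hsurj).rank_eq, rank_fun']
  simp

theorem isUnit_natCast {σ k : Type*} [Field k] [CharZero k] {n : ℕ} (hn : n ≠ 0) :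
    IsUnit (n : MvPowerSeries σ k) := by
  rw [isUnit_iff_constantCoeff, map_natCast]
  exact isUnit_iff_ne_zero.2 (Nat.cast_ne_zero.2 hn)

theorem mem_span_singleton_of_X_mul_mem {σ R : Type*} [CommRing R] {s t : σ} (hst : s ≠ t)
    (v : MvPowerSeries σ R) (m : ℕ) {r : MvPowerSeries σ R}
    (hr : X s * r ∈ Ideal.span {X s * v + X t ^ m}) :
    r ∈ Ideal.span {X s * v + X t ^ m} := by
  obtain ⟨α, hα⟩ := Ideal.mem_span_singleton'.1 hr
  have hdvd : X s ∣ α * X t ^ m := ⟨r - α * v, by linear_combination hα⟩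
  obtain ⟨β, rfl⟩ : X s ∣ α := X_dvd_iff.2 fun d hd => by
    have := X_dvd_iff.1 hdvd (d + Finsupp.single t m) (by simp [hd, hst])
    rwa [X_pow_eq, coeff_mul_monomial, if_pos le_add_self, add_tsub_cancel_right, mul_one]
      at this
  refine Ideal.mem_span_singleton'.2 ⟨β, ?_⟩
  rw [← mul_cancel_left_mem_nonZeroDivisors (X_mem_nonzeroDivisors (R := R) (i := s)), ← hα,
    mul_assoc]

end MvPowerSeries

theorem coe_pderiv_zero_X_pow_add_X_mul_X_pow_sub (a m q : ℕ) (t : ℂ) :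
    (↑(pderiv 0 (X 0 ^ (a + 1) + X 0 * X 1 ^ m - C t * X 1 ^ q : MvPolynomial (Fin 2) ℂ)) :
      MvPowerSeries (Fin 2) ℂ) =
      ((a : MvPowerSeries (Fin 2) ℂ) + 1) * MvPowerSeries.X 0 ^ a + MvPowerSeries.X 1 ^ m := by
  -- the coercion has no `coe_sub` lemma, so it is pushed inside as a ring hom
  rw [← coeToMvPowerSeries.ringHom_apply]
  simp [-coeToMvPowerSeries.ringHom_apply, coeToMvPowerSeries.ringHom_apply (X _)]

theorem coe_pderiv_one_X_pow_add_X_mul_X_pow_sub (a m q : ℕ) (t : ℂ) :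
    (↑(pderiv 1 (X 0 ^ (a + 1) + X 0 * X 1 ^ m - C t * X 1 ^ q : MvPolynomial (Fin 2) ℂ)) :
      MvPowerSeries (Fin 2) ℂ) =
      MvPowerSeries.X 0 * ((m : MvPowerSeries (Fin 2) ℂ) * MvPowerSeries.X 1 ^ (m - 1))
        - MvPowerSeries.C t * ((q : MvPowerSeries (Fin 2) ℂ) * MvPowerSeries.X 1 ^ (q - 1)) := by
  rw [← coeToMvPowerSeries.ringHom_apply]
  simp [-coeToMvPowerSeries.ringHom_apply, coeToMvPowerSeries.ringHom_apply (X _),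
    coeToMvPowerSeries.ringHom_apply (C _)]

theorem milnor_X_pow_add_X_mul_X_pow_sub_C_mul_X_pow {a m q : ℕ} (hq : 1 ≤ q) (hqm : q ≤ m)
    {t : ℂ} (ht : t ≠ 0) :
    milnor (X 0 ^ (a + 1) + X 0 * X 1 ^ m - C t * X 1 ^ q) = a * (q - 1) := by
  rw [milnor, coe_pderiv_zero_X_pow_add_X_mul_X_pow_sub,
    coe_pderiv_one_X_pow_add_X_mul_X_pow_sub]
  set x : MvPowerSeries (Fin 2) ℂ := MvPowerSeries.X 0
  set z : MvPowerSeries (Fin 2) ℂ := MvPowerSeries.X 1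
  set T : MvPowerSeries (Fin 2) ℂ := MvPowerSeries.C t
  have hx : (a + 1) * x ^ a + z ^ m = (a + 1) * x ^ a + z ^ (m - q + 1) * z ^ (q - 1) := by
    rw [← pow_add, show m - q + 1 + (q - 1) = m by omega]
  have hz : x * (m * z ^ (m - 1)) - T * (q * z ^ (q - 1)) =
      (m * x * z ^ (m - q) - T * q) * z ^ (q - 1) := by
    rw [show m - 1 = m - q + (q - 1) by omega, pow_add]
    ring
  have hcx : IsUnit ((a : MvPowerSeries (Fin 2) ℂ) + 1) := by
    exact_mod_cast MvPowerSeries.isUnit_natCast a.succ_ne_zero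
  have hcz : IsUnit (m * x * z ^ (m - q) - T * q) := by
    rw [MvPowerSeries.isUnit_iff_constantCoeff]
    simp only [map_sub, map_mul, MvPowerSeries.constantCoeff_X, mul_zero, zero_mul,
      MvPowerSeries.constantCoeff_C, map_natCast, zero_sub, isUnit_iff_ne_zero, neg_ne_zero, x, T]
    exact mul_ne_zero ht (Nat.cast_ne_zero.2 (by omega))
  rw [hx, hz, Ideal.span_pair_mul_left_unit hcz, Ideal.span_pair_unit_mul_add_mul_right hcx]
  apply Module.finrank_eq_of_rank_eq
  rw [MvPowerSeries.rank_quotient_span_X_pow_pair]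
  norm_cast

theorem milnor_X_pow_add_X_mul_X_pow {a m : ℕ} (ha : 1 ≤ a) (hm : 1 ≤ m) :
    milnor (X 0 ^ (a + 1) + X 0 * X 1 ^ m) = m + a * (m - 1) := by
  have h : (X 0 ^ (a + 1) + X 0 * X 1 ^ m : MvPolynomial (Fin 2) ℂ) =
      X 0 ^ (a + 1) + X 0 * X 1 ^ m - C 0 * X 1 ^ 1 := by simp
  rw [h, milnor, coe_pderiv_zero_X_pow_add_X_mul_X_pow_sub,
    coe_pderiv_one_X_pow_add_X_mul_X_pow_sub, map_zero, zero_mul, sub_zero]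
  set x : MvPowerSeries (Fin 2) ℂ := MvPowerSeries.X 0
  set z : MvPowerSeries (Fin 2) ℂ := MvPowerSeries.X 1
  set f := (a + 1) * x ^ a + z ^ m
  have hfx : f = x * ((a + 1) * x ^ (a - 1)) + z ^ m := by
    rw [mul_left_comm, ← pow_succ', Nat.sub_add_cancel ha]
  have hfz : f = (a + 1) * x ^ a + z * z ^ (m - 1) := by
    rw [← pow_succ', Nat.sub_add_cancel hm]
  have hspan_x : Ideal.span {f, x} = Ideal.span {x ^ 1, z ^ m} := by
    rw [hfx, pow_one, Ideal.span_pair_comm, add_comm, mul_comm x, Ideal.span_pair_add_mul_left]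
  have hspan_z : Ideal.span {f, z ^ (m - 1)} = Ideal.span {x ^ a, z ^ (m - 1)} := by
    rw [hfz, Ideal.span_pair_unit_mul_add_mul_right]
    exact_mod_cast MvPowerSeries.isUnit_natCast a.succ_ne_zero
  have hregular : ∀ r, x * r ∈ Ideal.span {f} → r ∈ Ideal.span {f} := by
    rw [hfx]
    exact fun r => MvPowerSeries.mem_span_singleton_of_X_mul_mem (by decide) _ m
  apply Module.finrank_eq_of_rank_eq
  rw [mul_left_comm, Ideal.span_pair_mul_left_unit (MvPowerSeries.isUnit_natCast (by omega)),
    Ideal.rank_quotient_span_pair_mul hregular,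
    hspan_x, hspan_z, MvPowerSeries.rank_quotient_span_X_pow_pair,
    MvPowerSeries.rank_quotient_span_X_pow_pair]
  push_cast
  ring

theorem stmt_6_general (a b p q : ℕ) (ha : 1 ≤ a) (hp : 1 ≤ p) (hq : 1 ≤ q)
    (habpq : a + b + 1 = p + q) :
    (∀ t : ℂ, t ≠ 0 →
      milnor ((X 0) ^ (a + 1) + X 0 * (X 1) ^ (a + b) - C t * (X 1) ^ q) = a * (q - 1)) ∧
    milnor ((X 0) ^ (a + 1) + X 0 * (X 1) ^ (a + b)) = a ^ 2 + a * b + b ∧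
    (a ^ 2 + a * b + b : ℤ) - a * (q - 1) = b + a * p := by
  refine ⟨fun t ht => milnor_X_pow_add_X_mul_X_pow_sub_C_mul_X_pow hq (by omega) ht, ?_, ?_⟩
  · rw [milnor_X_pow_add_X_mul_X_pow ha (by omega)]
    zify [show 1 ≤ a + b by omega]
    ring
  · have h : (a + b + 1 : ℤ) = p + q := by exact_mod_cast habpq
    linear_combination (a : ℤ) * h

/-- for integers a,b,p,q ≥ 1 with a+b+1 = p+q, the germ
`x^{a+1} + x z^{a+b} − t z^q` at the origin has Milnor number a(q−1) for t ≠ 0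
(Brieskorn type (a+1,q)) and Milnor number a² + ab + b for t = 0; hence the jump
at t = 0 equals b + ap. Here `X 0 = x`, `X 1 = z`. -/
theorem stmt_6 (a b p q : ℕ) (ha : 1 ≤ a) (hb : 1 ≤ b) (hp : 1 ≤ p) (hq : 1 ≤ q)
    (habpq : a + b + 1 = p + q) :
    (∀ t : ℂ, t ≠ 0 →
      milnor ((X 0) ^ (a + 1) + X 0 * (X 1) ^ (a + b) - C t * (X 1) ^ q) = a * (q - 1)) ∧
    milnor ((X 0) ^ (a + 1) + X 0 * (X 1) ^ (a + b)) = a ^ 2 + a * b + b ∧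
    (a ^ 2 + a * b + b : ℤ) - a * (q - 1) = b + a * p :=
  stmt_6_general a b p q ha hp hq habpq
end

section
/- For the meromorphic function f = x(z^{a+b} + x^a y^b)/(y^p z^q) on ℙ² with a+b+1 = p+q, the zero fiber F₀ = f^{-1}(0) ∩ (ℙ² \ Pol(f)) is a disjoint union of c + 1 copies of ℂ*, where c = gcd(a, b); in particular χ(F₀) = 0. -/
/-!
The axis `x = 0` and the curve `1 + x^a y^b = 0` are disjoint, so they are clopen pieces of the
zero fibre; the first is a copy of `ℂ*`. The second lies in the torus `ℂ* × ℂ*`. Writing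
`a = c a'`, `b = c b'` with `c = gcd a b`, a Bézout relation for the coprime `a', b'` yields a
monomial automorphism of the torus that turns `x^a y^b` into `s^c`, so the curve becomes
`{s | s^c = -1} × ℂ*`, that is `c` copies of `ℂ*`.
-/

section TorusMonomial

variable {G : Type*} [CommGroup G]

def torusMonomial (m n : ℤ) (u : G × G) : G := u.1 ^ m * u.2 ^ n

@[simp]
lemma torusMonomial_one_zero (u : G × G) : torusMonomial 1 0 u = u.1 := by
  simp [torusMonomial]

@[simp]
lemma torusMonomial_zero_one (u : G × G) : torusMonomial 0 1 u = u.2 := by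
  simp [torusMonomial]

lemma torusMonomial_torusMonomial (p q m n k l : ℤ) (u : G × G) :
    torusMonomial p q (torusMonomial m n u, torusMonomial k l u) =
      torusMonomial (m * p + k * q) (n * p + l * q) u := by
  simp only [torusMonomial, mul_zpow, ← zpow_mul, zpow_add]
  exact mul_mul_mul_comm _ _ _ _

variable [TopologicalSpace G] [IsTopologicalGroup G]

@[fun_prop]
lemma continuous_torusMonomial (m n : ℤ) : Continuous (torusMonomial (G := G) m n) := by
  unfold torusMonomial
  fun_prop

/-- The automorphism of the torus given by `!![m, n; k, l] ∈ SL₂(ℤ)`; its inverse is the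
adjugate matrix. -/
@[simps]
def torusMonomialHomeomorph (m n k l : ℤ) (h : m * l - n * k = 1) : G × G ≃ₜ G × G where
  toFun u := (torusMonomial m n u, torusMonomial k l u)
  invFun u := (torusMonomial l (-n) u, torusMonomial (-k) m u)
  left_inv u := by
    simp only [torusMonomial_torusMonomial, show m * l + k * -n = 1 by linear_combination h,
      show n * l + l * -n = 0 by ring, show m * -k + k * m = 0 by ring,
      show n * -k + l * m = 1 by linear_combination h, torusMonomial_one_zero,
      torusMonomial_zero_one]
  right_inv u := by
    simp only [torusMonomial_torusMonomial, show l * m + -k * n = 1 by linear_combination h,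
      show -n * m + m * n = 0 by ring, show l * k + -k * l = 0 by ring,
      show -n * k + m * l = 1 by linear_combination h, torusMonomial_one_zero,
      torusMonomial_zero_one]
  continuous_toFun := by fun_prop
  continuous_invFun := by fun_prop

def Homeomorph.prodSubtypeFstEquivSubtypeProd {X Y : Type*} [TopologicalSpace X]
    [TopologicalSpace Y] (p : X → Prop) : {v : X × Y // p v.1} ≃ₜ {x // p x} × Y where
  toFun v := (⟨v.1.1, v.2⟩, v.1.2)
  invFun w := ⟨(w.1.1, w.2), w.1.2⟩
  left_inv _ := rfl
  right_inv _ := rfl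

theorem nonempty_homeomorph_pow_mul_pow_eq (a b : ℕ) (g : G) :
    Nonempty ({u : G × G // u.1 ^ a * u.2 ^ b = g} ≃ₜ {s : G // s ^ Nat.gcd a b = g} × G) := by
  obtain ⟨a', b', hcop, ha, hb⟩ := Nat.exists_coprime a b
  set c := Nat.gcd a b
  have hbez : (a' : ℤ) * a'.gcdA b' + b' * a'.gcdB b' = 1 := by
    simpa [hcop] using (Nat.gcd_eq_gcd_ab a' b').symm
  let e := torusMonomialHomeomorph (G := G) (a'.gcdA b') (-b') (a'.gcdB b') a'
    (by linear_combination hbez)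
  have key (v : G × G) : (e v).1 ^ a * (e v).2 ^ b = v.1 ^ c := by
    have hexp : torusMonomial a b (e v) = torusMonomial c 0 v := by
      rw [torusMonomialHomeomorph_apply, torusMonomial_torusMonomial]
      congr 1
      · rw [ha, hb]; push_cast; linear_combination (c : ℤ) * hbez
      · rw [ha, hb]; push_cast; ring
    simpa [torusMonomial] using hexp
  exact ⟨(e.subtype fun v => by rw [key]).symm.trans
    (Homeomorph.prodSubtypeFstEquivSubtypeProd _)⟩

end TorusMonomial

theorem Complex.natCard_units_pow_eq (n : ℕ) [NeZero n] (w : ℂˣ) :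
    Nat.card {s : ℂˣ // s ^ n = w} = n := by
  obtain ⟨r, hr⟩ := IsAlgClosed.exists_pow_nat_eq (w : ℂ) (NeZero.pos n)
  have hr0 : r ≠ 0 := by rintro rfl; exact w.ne_zero (by simpa [NeZero.ne n] using hr.symm)
  set ru := Units.mk0 r hr0
  have hru : ru ^ n = w := Units.ext (by simpa [ru] using hr)
  refine (Nat.card_congr (Equiv.subtypeEquiv (Equiv.mulRight ru⁻¹) fun s => ?_)).trans
    (card_rootsOfUnity n)
  rw [Equiv.coe_mulRight, _root_.mem_rootsOfUnity, mul_pow, inv_pow, hru, mul_inv_eq_one]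

theorem Complex.nonempty_homeomorph_units_pow_eq_fin (n : ℕ) [NeZero n] (w : ℂˣ) :
    Nonempty ({s : ℂˣ // s ^ n = w} ≃ₜ Fin n) := by
  have hcard := Complex.natCard_units_pow_eq n w
  have : Finite {s : ℂˣ // s ^ n = w} :=
    Nat.finite_of_card_ne_zero (by rw [hcard]; exact NeZero.ne n)
  exact ⟨((Finite.equivFin _).trans (finCongr hcard)).toHomeomorphOfDiscrete⟩

def Homeomorph.sumCompl {X : Type*} [TopologicalSpace X] {p : X → Prop} [DecidablePred p]
    (hp : IsClopen {x | p x}) : {x // p x} ⊕ {x // ¬ p x} ≃ₜ X :=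
  (Equiv.sumCompl p).toHomeomorphOfContinuousOpen
    (continuous_subtype_val.sumElim continuous_subtype_val)
    (isOpenMap_sumElim.mpr
      ⟨hp.isOpen.isOpenMap_subtype_val, hp.compl.isOpen.isOpenMap_subtype_val⟩)

def Homeomorph.sumFinProd (X : Type*) [TopologicalSpace X] (n : ℕ) :
    X ⊕ Fin n × X ≃ₜ Fin (n + 1) × X :=
  ((Homeomorph.uniqueProd (Fin 1) X).symm.sumCongr (Homeomorph.refl _)).trans <|
    Homeomorph.sumProdDistrib.symm.trans <|
      (finSumFinEquiv.trans (finCongr (add_comm 1 n))).toHomeomorphOfDiscrete.prodCongr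
        (Homeomorph.refl X)

def zeroFiber (a b : ℕ) : Set (ℂ × ℂ) := {v | v.2 ≠ 0 ∧ v.1 * (1 + v.1 ^ a * v.2 ^ b) = 0}

lemma isClopen_setOf_zeroFiber_fst_eq_zero {a : ℕ} (ha : a ≠ 0) (b : ℕ) :
    IsClopen {v : zeroFiber a b | v.1.1 = 0} := by
  have hset : {v : zeroFiber a b | v.1.1 = 0} = {v | 1 + v.1.1 ^ a * v.1.2 ^ b ≠ 0} := by
    ext ⟨v, hv0, hv⟩
    refine ⟨fun (h : v.1 = 0) => by simp [h, ha], fun h => (mul_eq_zero.mp hv).resolve_right h⟩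
  refine ⟨isClosed_eq (by fun_prop) continuous_const, ?_⟩
  rw [hset]
  exact isOpen_ne_fun (by fun_prop) continuous_const

def zeroFiberAxisHomeomorph (a b : ℕ) :
    {v : zeroFiber a b // v.1.1 = 0} ≃ₜ {w : ℂ // w ≠ 0} where
  toFun v := ⟨v.1.1.2, v.1.2.1⟩
  invFun w := ⟨⟨(0, w.1), w.2, zero_mul _⟩, rfl⟩
  left_inv := by
    rintro ⟨⟨⟨x, y⟩, hv⟩, rfl : x = 0⟩
    rfl
  right_inv _ := rfl

noncomputable def zeroFiberTorusHomeomorph (a b : ℕ) :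
    {v : zeroFiber a b // ¬ v.1.1 = 0} ≃ₜ {u : ℂˣ × ℂˣ // u.1 ^ a * u.2 ^ b = -1} where
  toFun v := ⟨(Units.mk0 v.1.1.1 v.2, Units.mk0 v.1.1.2 v.1.2.1), Units.ext <| by
    simpa using eq_neg_of_add_eq_zero_right ((mul_eq_zero.mp v.1.2.2).resolve_left v.2)⟩
  invFun u := ⟨⟨((u.1.1 : ℂ), (u.1.2 : ℂ)), u.1.2.ne_zero, by
    rw [← Units.val_pow_eq_pow_val, ← Units.val_pow_eq_pow_val, ← Units.val_mul, u.2]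
    simp⟩, u.1.1.ne_zero⟩
  left_inv _ := rfl
  right_inv _ := Subtype.ext (Prod.ext (Units.ext rfl) (Units.ext rfl))
  continuous_toFun := by
    refine Continuous.subtype_mk (Continuous.prodMk ?_ ?_) _ <;>
      exact Units.isEmbedding_val₀.continuous_iff.mpr (by fun_prop)
  continuous_invFun := by fun_prop

theorem stmt_7_general (a b : ℕ) (ha : 1 ≤ a) :
    Nonempty
      (({v : ℂ × ℂ | v.2 ≠ 0 ∧ v.1 * (1 + v.1 ^ a * v.2 ^ b) = 0} : Set (ℂ × ℂ)) ≃ₜ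
        Fin (Nat.gcd a b + 1) × ({w : ℂ | w ≠ 0} : Set ℂ)) := by
  classical
  have : NeZero (Nat.gcd a b) := ⟨(Nat.gcd_pos_of_pos_left b ha).ne'⟩
  obtain ⟨torusPart⟩ := nonempty_homeomorph_pow_mul_pow_eq (G := ℂˣ) a b (-1)
  obtain ⟨roots⟩ := Complex.nonempty_homeomorph_units_pow_eq_fin (Nat.gcd a b) (-1)
  have hclopen := isClopen_setOf_zeroFiber_fst_eq_zero (Nat.one_le_iff_ne_zero.mp ha) b
  exact ⟨(Homeomorph.sumCompl hclopen).symm.trans <|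
    ((zeroFiberAxisHomeomorph a b).sumCongr <| (zeroFiberTorusHomeomorph a b).trans <|
      torusPart.trans <| roots.prodCongr unitsHomeomorphNeZero).trans <|
    Homeomorph.sumFinProd _ _⟩

/-- for f = x(z^{a+b} + x^a y^b)/(y^p z^q) on ℙ² with a+b+1 = p+q, the
zero fiber F₀ = f⁻¹(0) ∩ (ℙ² \ Pol(f)) lies in the chart z = 1 (with coordinates
(x,y)), where it is the set {(x,y) | y ≠ 0 ∧ x(1 + x^a y^b) = 0}. It is a disjoint
union of c+1 copies of ℂ*, where c = gcd(a,b): it is homeomorphic to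
Fin (gcd a b + 1) × ℂ*. -/
theorem stmt_7 (a b p q : ℕ) (ha : 1 ≤ a) (hb : 1 ≤ b) (hp : 1 ≤ p) (hq : 1 ≤ q)
    (habpq : a + b + 1 = p + q) :
    Nonempty
      (({v : ℂ × ℂ | v.2 ≠ 0 ∧ v.1 * (1 + v.1 ^ a * v.2 ^ b) = 0} : Set (ℂ × ℂ)) ≃ₜ
        Fin (Nat.gcd a b + 1) × ({w : ℂ | w ≠ 0} : Set ℂ)) :=
  stmt_7_general a b ha
end
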